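/- arXiv:2103.16263 — 3 statements merged into one kernel-verified Lean document; each statement's English description precedes it below -/
import Mathlib

section
/- Let c > 0 and d > 0 be real numbers, and let x : [0, ∞) → ℝ be a differentiable function with x(0) ≥ 0 and x'(t) ≤ x(t)·(c − d·x(t)) for all t ≥ 0. Then limsup_{t→∞} x(t) ≤ c/d. -/
/-!
Above any level `K > c / d` the logistic rate `x (c - d x)` is at most `-K (d K - c) < 0`.
So `x` cannot stay above `K` forever (it would decrease at a fixed linear rate), and once it
is at or below `K` it can never cross `K` upwards again. Hence `x ≤ K` eventually, for every
`K > c / d`.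
-/

open Filter Set

/-- The hypothesis `0 ≤ b` covers the junk value `limsup f l = 0` when `f` is not bounded below
along `l`. -/
theorem Real.limsup_le_of_forall_lt_eventually_le {α : Type*} {l : Filter α} {f : α → ℝ} {b : ℝ}
    (hb : 0 ≤ b) (h : ∀ K, b < K → ∀ᶠ t in l, f t ≤ K) : limsup f l ≤ b := by
  refine le_of_forall_pos_le_add fun ε hε => ?_
  rw [limsup_eq]
  by_cases hbdd : BddBelow {a | ∀ᶠ t in l, f t ≤ a}
  · exact csInf_le hbdd (h _ (lt_add_of_pos_right b hε))
  · rw [Real.sInf_of_not_bddBelow hbdd]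
    positivity

theorem logistic_le_of_le {c d x K : ℝ} (hd : 0 ≤ d) (hK : c ≤ 2 * d * K) (hx : K ≤ x) :
    x * (c - d * x) ≤ K * (c - d * K) := by
  nlinarith [mul_nonneg hd (sub_nonneg.2 hx)]

theorem image_le_of_deriv_neg_at_level {f f' : ℝ → ℝ} {a K : ℝ}
    (hf : ∀ t ≥ a, HasDerivAt f (f' t) t) (hK : ∀ t ≥ a, f t = K → f' t < 0) (ha : f a ≤ K) :
    ∀ t ≥ a, f t ≤ K := fun t ht =>
  image_le_of_deriv_right_lt_deriv_boundary (B := fun _ => K) (B' := 0)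
    (fun s hs => (hf s hs.1).continuousAt.continuousWithinAt)
    (fun s hs => (hf s hs.1).hasDerivWithinAt) ha (fun _ => hasDerivAt_const _ _)
    (fun s hs => hK s hs.1) (show t ∈ Icc a t from ⟨ht, le_rfl⟩)

theorem exists_le_of_deriv_le_neg_above {f f' : ℝ → ℝ} {a K m : ℝ} (hm : 0 < m)
    (hf : ∀ t ≥ a, HasDerivAt f (f' t) t) (hslope : ∀ t ≥ a, K < f t → f' t ≤ -m) :
    ∃ t ≥ a, f t ≤ K := by
  by_contra! habove
  -- the time at which descent at slope `-m` from `f a` would reach `K`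
  set t := a + (f a - K) / m
  have hat : a ≤ t := le_add_of_nonneg_right (div_nonneg (sub_nonneg.2 (habove a le_rfl).le) hm.le)
  have hdrop : f t - f a ≤ -m * (t - a) :=
    (convex_Ici a).image_sub_le_mul_sub_of_deriv_le
      (fun s hs => (hf s hs).continuousAt.continuousWithinAt)
      (fun s hs => (hf s (interior_subset hs)).differentiableAt.differentiableWithinAt)
      (fun s hs => ((hf s (interior_subset hs)).deriv).trans_le
        (hslope s (interior_subset hs) (habove s (interior_subset hs))))
      a self_mem_Ici t hat hat
  have hreach : -m * (t - a) = K - f a := by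
    simp only [t, add_sub_cancel_left]; field_simp; ring
  linarith [habove t hat]

theorem eventually_le_of_deriv_le_neg_above {f f' : ℝ → ℝ} {a K m : ℝ} (hm : 0 < m)
    (hf : ∀ t ≥ a, HasDerivAt f (f' t) t) (hslope : ∀ t ≥ a, K ≤ f t → f' t ≤ -m) :
    ∀ᶠ t in atTop, f t ≤ K := by
  obtain ⟨T, haT, hT⟩ := exists_le_of_deriv_le_neg_above hm hf fun t ht hK => hslope t ht hK.le
  have hbarrier := image_le_of_deriv_neg_at_level (fun t ht => hf t (haT.trans ht))
    (fun t ht hK => (hslope t (haT.trans ht) hK.ge).trans_lt (neg_neg_of_pos hm)) hT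
  filter_upwards [eventually_ge_atTop T] using hbarrier

theorem limsup_le_of_logistic_upper_general (c d : ℝ) (hc : 0 < c) (hd : 0 < d)
    (x x' : ℝ → ℝ)
    (hderiv : ∀ t ≥ (0 : ℝ), HasDerivAt x (x' t) t)
    (hineq : ∀ t ≥ (0 : ℝ), x' t ≤ x t * (c - d * x t)) :
    Filter.limsup x Filter.atTop ≤ c / d := by
  refine Real.limsup_le_of_forall_lt_eventually_le (div_pos hc hd).le fun K hK => ?_
  have hcK : c < d * K := (div_lt_iff₀' hd).1 hK
  have hm : 0 < K * (d * K - c) := mul_pos ((div_pos hc hd).trans hK) (sub_pos.2 hcK)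
  refine eventually_le_of_deriv_le_neg_above hm hderiv fun t ht hxt => ?_
  calc x' t ≤ x t * (c - d * x t) := hineq t ht
    _ ≤ K * (c - d * K) := logistic_le_of_le hd.le (by linarith) hxt
    _ = -(K * (d * K - c)) := by ring

/-- Logistic comparison lemma (upper bound): if `x' ≤ x (c − d x)` on `[0, ∞)`
with `x 0 ≥ 0` and `c, d > 0`, then `limsup_{t→∞} x t ≤ c / d`. -/
theorem limsup_le_of_logistic_upper (c d : ℝ) (hc : 0 < c) (hd : 0 < d)
    (x x' : ℝ → ℝ)
    (hderiv : ∀ t ≥ (0 : ℝ), HasDerivAt x (x' t) t)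
    (hx0 : 0 ≤ x 0)
    (hineq : ∀ t ≥ (0 : ℝ), x' t ≤ x t * (c - d * x t)) :
    Filter.limsup x Filter.atTop ≤ c / d :=
  limsup_le_of_logistic_upper_general c d hc hd x x' hderiv hineq
end

section
/- Let m, c, d, e, a > 0 and p ∈ [0,1], and suppose 0 < e/d − a < 1. Set x* = e/d − a, y* = (1/m)·(1 − e/d + a)·((e/d − a)^p + c), and μ = min{m, e}. Assume μ < d·x*/(x*^p + c) and d − e/(x* + a) < (d/m)·(x*/y*)². Then every pair of differentiable functions x, y : [0, ∞) → ℝ with x(0) > 0, y(0) > 0 that remains positive and satisfies x'(t) = x(t)(1 − x(t)) − m·x(t)·y(t)/(x(t)^p + c) and y'(t) = (d − e/(x(t) + a))·y(t)² for all t ≥ 0 is bounded: there exists M > 0 such that x(t) ≤ M and y(t) ≤ M for all t ≥ 0. -/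
/-!
The prey is bounded by `max (x 0) 1`, since `x' < 0` as soon as `x ≥ 1`. For the predator,
`y` decreases while `x < x* = e/d - a`, and for a suitable `γ` the Lyapunov function
`log y + γ log x` decreases while `y` is large, because then the prey is eaten fast.
Follow `y` back from a time `t` to the last time `s` at which `y` was moderate, and let `u` be
the last time in `[s, t]` with `x ≥ x*`: on `[s, u]` the Lyapunov function bounds `y u`
in terms of `y s` and the bounds on `x`, and on `[u, t]` the predator only decreases.
-/

open Set Real

lemma le_of_hasDerivAt_neg_of_eq {f f' : ℝ → ℝ} {a B : ℝ}
    (hf : ∀ t ≥ a, HasDerivAt f (f' t) t) (ha : f a ≤ B)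
    (hB : ∀ t ≥ a, f t = B → f' t < 0) : ∀ t ≥ a, f t ≤ B := fun _ ht =>
  image_le_of_deriv_right_lt_deriv_boundary' (HasDerivAt.continuousOn fun s hs => hf s hs.1)
    (fun s hs => (hf s hs.1).hasDerivWithinAt) ha continuousOn_const
    (fun _ _ => hasDerivWithinAt_const _ _ _) (fun s hs => hB s hs.1) ⟨ht, le_rfl⟩

lemma antitoneOn_Icc_of_hasDerivAt_nonpos {f f' : ℝ → ℝ} {a b : ℝ}
    (hf : ∀ t ∈ Icc a b, HasDerivAt f (f' t) t) (hf' : ∀ t ∈ Ioo a b, f' t ≤ 0) :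
    AntitoneOn f (Icc a b) := by
  refine antitoneOn_of_hasDerivWithinAt_nonpos (convex_Icc a b) (HasDerivAt.continuousOn hf)
    (fun t ht => ?_) (fun t ht => hf' t (by rwa [interior_Icc] at ht))
  rw [interior_Icc] at ht ⊢
  exact (hf t (Ioo_subset_Icc_self ht)).hasDerivWithinAt

lemma ContinuousOn.exists_forall_Ioc_lt {f : ℝ → ℝ} {a b : ℝ} (c : ℝ) (hab : a ≤ b)
    (hf : ContinuousOn f (Icc a b)) :
    ∃ s ∈ Icc a b, (s = a ∨ f s ≤ c) ∧ ∀ t ∈ Ioc s b, c < f t := by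
  set S := {a} ∪ Icc a b ∩ f ⁻¹' Iic c
  have hS : IsClosed S :=
    isClosed_singleton.union (hf.preimage_isClosed_of_isClosed isClosed_Icc isClosed_Iic)
  have hbdd : BddAbove S := ⟨b, by rintro t (rfl | ⟨ht, -⟩); exacts [hab, ht.2]⟩
  have hne : S.Nonempty := ⟨a, .inl rfl⟩
  have haS : a ≤ sSup S := le_csSup hbdd (.inl rfl)
  have hSb : sSup S ≤ b := csSup_le hne (by rintro t (rfl | ⟨ht, -⟩); exacts [hab, ht.2])
  refine ⟨sSup S, ⟨haS, hSb⟩, ?_, fun t ht => ?_⟩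
  · rcases hS.csSup_mem hne hbdd with h | ⟨-, h⟩
    exacts [.inl h, .inr h]
  · by_contra! hft
    exact (le_csSup hbdd (.inr ⟨⟨haS.trans ht.1.le, ht.2⟩, hft⟩)).not_gt ht.1

theorem le_exp_of_antitone_lyapunov {x y x' y' : ℝ → ℝ} {ξ B Y γ : ℝ} (hξ : 0 < ξ)
    (hξB : ξ ≤ B) (hγ : 0 ≤ γ)
    (hx : ∀ t ≥ 0, HasDerivAt x (x' t) t) (hy : ∀ t ≥ 0, HasDerivAt y (y' t) t)
    (hxpos : ∀ t ≥ 0, 0 < x t) (hypos : ∀ t ≥ 0, 0 < y t) (hxB : ∀ t ≥ 0, x t ≤ B)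
    (hy0 : y 0 ≤ Y) (hy' : ∀ t ≥ 0, x t < ξ → y' t ≤ 0)
    (hV' : ∀ t ≥ 0, Y < y t → y' t / y t + γ * (x' t / x t) ≤ 0) :
    ∀ t ≥ 0, y t ≤ exp (log Y + γ * (log B - log ξ)) := by
  intro t ht
  have hY : 0 < Y := (hypos 0 le_rfl).trans_le hy0
  have hYle : Y ≤ exp (log Y + γ * (log B - log ξ)) := by
    rw [exp_add, exp_log hY]
    exact le_mul_of_one_le_right hY.le
      (one_le_exp (mul_nonneg hγ (sub_nonneg.2 (log_le_log hξ hξB))))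
  obtain ⟨s, ⟨hs, hst⟩, hys, hY_lt⟩ :=
    ContinuousOn.exists_forall_Ioc_lt Y ht (HasDerivAt.continuousOn fun r hr => hy r hr.1)
  replace hys : y s ≤ Y := hys.elim (fun h => h ▸ hy0) id
  obtain ⟨u, ⟨hsu, hut⟩, hxu, hx_lt⟩ := ContinuousOn.exists_forall_Ioc_lt (-ξ) hst
    (HasDerivAt.continuousOn fun r hr => (hx r (hs.trans hr.1)).neg)
  have hyut : y t ≤ y u :=
    antitoneOn_Icc_of_hasDerivAt_nonpos (fun r hr => hy r (hs.trans (hsu.trans hr.1)))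
      (fun r hr => hy' r (hs.trans (hsu.trans hr.1.le)) (neg_lt_neg_iff.1 (hx_lt r
        (Ioo_subset_Ioc_self hr)))) ⟨le_rfl, hut⟩ ⟨hut, le_rfl⟩ hut
  rcases hxu with rfl | hxu
  · exact hyut.trans (hys.trans hYle)
  have hV : log (y u) + γ * log (x u) ≤ log (y s) + γ * log (x s) := by
    refine antitoneOn_Icc_of_hasDerivAt_nonpos (f := fun r => log (y r) + γ * log (x r))
      (f' := fun r => y' r / y r + γ * (x' r / x r)) (fun r hr => ?_) (fun r hr => ?_)
      ⟨le_rfl, hsu⟩ ⟨hsu, le_rfl⟩ hsu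
    · have hr0 : 0 ≤ r := hs.trans hr.1
      exact ((hy r hr0).log (hypos r hr0).ne').add
        (((hx r hr0).log (hxpos r hr0).ne').const_mul γ)
    · exact hV' r (hs.trans hr.1.le) (hY_lt r ⟨hr.1, hr.2.le.trans hut⟩)
  have hu : 0 ≤ u := hs.trans hsu
  have hlogy : log (y s) ≤ log Y := log_le_log (hypos s hs) hys
  have hlogxs : γ * log (x s) ≤ γ * log B :=
    mul_le_mul_of_nonneg_left (log_le_log (hxpos s hs) (hxB s hs)) hγ
  have hlogxu : γ * log ξ ≤ γ * log (x u) :=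
    mul_le_mul_of_nonneg_left (log_le_log hξ (neg_le_neg_iff.1 hxu)) hγ
  refine hyut.trans ((log_le_iff_le_exp (hypos u hu)).1 ?_)
  linarith

lemma rpow_le_of_le_of_one_le {X B p : ℝ} (hX : 0 ≤ X) (hXB : X ≤ B) (hB : 1 ≤ B)
    (hp : p ∈ Icc (0 : ℝ) 1) : X ^ p ≤ B :=
  calc X ^ p ≤ B ^ p := rpow_le_rpow hX hXB hp.1
    _ ≤ B ^ (1 : ℝ) := rpow_le_rpow_of_exponent_le hB hp.2
    _ = B := rpow_one B

lemma predator_deriv_nonpos {d e a X Y : ℝ} (hd : 0 < d) (hX : 0 < X + a)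
    (hXe : X < e / d - a) : (d - e / (X + a)) * Y ^ 2 ≤ 0 := by
  refine mul_nonpos_of_nonpos_of_nonneg ?_ (sq_nonneg Y)
  rw [sub_nonpos, le_div_iff₀ hX]
  rw [lt_sub_iff_add_lt, lt_div_iff₀ hd] at hXe
  linarith

/- `γ = 2 (B + c) d / m` makes the predation loss `γ m Y / (B + c) = 2 d Y` of `γ log x`
outweigh the growth `d Y` of `log y`. -/
lemma lyapunov_deriv_nonpos {m c d e a p B X Y : ℝ} (hm : 0 < m) (hc : 0 < c) (hd : 0 < d)
    (he : 0 < e) (ha : 0 < a) (hX : 0 < X) (hXB : X ^ p ≤ B) (hY : 2 * (B + c) / m ≤ Y) :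
    (d - e / (X + a)) * Y ^ 2 / Y +
      2 * (B + c) * d / m * ((X * (1 - X) - m * X * Y / (X ^ p + c)) / X) ≤ 0 := by
  have hXp : 0 < X ^ p := rpow_pos_of_pos hX p
  have hBc : 0 < B + c := by linarith
  have hY0 : 0 < Y := (by positivity : 0 < 2 * (B + c) / m).trans_le hY
  have hfood : m * Y / (B + c) ≤ m * Y / (X ^ p + c) :=
    div_le_div_of_nonneg_left (by positivity) (by positivity) (by linarith)
  have hpred : (d - e / (X + a)) * Y ≤ d * Y := by
    nlinarith [(by positivity : 0 < e / (X + a))]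
  have hγY : 2 * (B + c) * d / m ≤ d * Y := by
    rw [div_le_iff₀ hm]; rw [div_le_iff₀ hm] at hY; nlinarith
  calc (d - e / (X + a)) * Y ^ 2 / Y +
        2 * (B + c) * d / m * ((X * (1 - X) - m * X * Y / (X ^ p + c)) / X)
      = (d - e / (X + a)) * Y + 2 * (B + c) * d / m * (1 - X - m * Y / (X ^ p + c)) := by
        field_simp
    _ ≤ d * Y + 2 * (B + c) * d / m * (1 - m * Y / (B + c)) := by
        gcongr; linarith
    _ = 2 * (B + c) * d / m - d * Y := by field_simp; ring
    _ ≤ 0 := by linarith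

theorem boundedness_of_solutions_general
    (m c d e a p : ℝ) (hm : 0 < m) (hc : 0 < c) (hd : 0 < d) (he : 0 < e)
    (ha : 0 < a) (hp : p ∈ Set.Icc (0 : ℝ) 1)
    (hxs0 : 0 < e / d - a) (hxs1 : e / d - a < 1)
    (x y : ℝ → ℝ)
    (hxpos : ∀ t ≥ (0 : ℝ), 0 < x t) (hypos : ∀ t ≥ (0 : ℝ), 0 < y t)
    (hx : ∀ t ≥ (0 : ℝ),
      HasDerivAt x (x t * (1 - x t) - m * x t * y t / (x t ^ p + c)) t)
    (hy : ∀ t ≥ (0 : ℝ),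
      HasDerivAt y ((d - e / (x t + a)) * y t ^ 2) t) :
    ∃ M > (0 : ℝ), ∀ t ≥ (0 : ℝ), x t ≤ M ∧ y t ≤ M := by
  set B := max (x 0) 1
  have hB : 1 ≤ B := le_max_right _ _
  have hxB : ∀ t ≥ 0, x t ≤ B := by
    refine le_of_hasDerivAt_neg_of_eq hx (le_max_left _ _) fun t ht hxt => ?_
    have hxt0 := hxpos t ht
    have hyt0 := hypos t ht
    have hpredation : 0 < m * x t * y t / (x t ^ p + c) := by positivity
    nlinarith
  have hyK := le_exp_of_antitone_lyapunov (Y := max (y 0) (2 * (B + c) / m))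
    (γ := 2 * (B + c) * d / m) hxs0 (hxs1.le.trans hB) (by positivity) hx hy hxpos hypos hxB
    (le_max_left _ _)
    (fun t ht hxt => predator_deriv_nonpos hd (by linarith [hxpos t ht]) hxt)
    (fun t ht hyt => lyapunov_deriv_nonpos hm hc hd he ha (hxpos t ht)
      (rpow_le_of_le_of_one_le (hxpos t ht).le (hxB t ht) hB hp)
      ((le_max_right _ _).trans hyt.le))
  exact ⟨_, zero_lt_one.trans_le (hB.trans (le_max_left _ _)), fun t ht =>
    ⟨(hxB t ht).trans (le_max_left _ _), (hyK t ht).trans (le_max_right _ _)⟩⟩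

/-- Boundedness of positive solutions of the Hassell–Varley predator–prey system
under the conditions `μ < d x*/(x*^p + c)` and `d − e/(x*+a) < (d/m)(x*/y*)²`,
where `(x*, y*)` is the interior equilibrium and `μ = min{m, e}`. -/
theorem boundedness_of_solutions
    (m c d e a p : ℝ) (hm : 0 < m) (hc : 0 < c) (hd : 0 < d) (he : 0 < e)
    (ha : 0 < a) (hp : p ∈ Set.Icc (0 : ℝ) 1)
    (hxs0 : 0 < e / d - a) (hxs1 : e / d - a < 1)
    (hμ : min m e <
      d * (e / d - a) / ((e / d - a) ^ p + c))
    (hcond : d - e / ((e / d - a) + a) <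
      (d / m) * ((e / d - a) /
        ((1 / m) * (1 - e / d + a) * ((e / d - a) ^ p + c))) ^ 2)
    (x y : ℝ → ℝ) (hx0 : 0 < x 0) (hy0 : 0 < y 0)
    (hxpos : ∀ t ≥ (0 : ℝ), 0 < x t) (hypos : ∀ t ≥ (0 : ℝ), 0 < y t)
    (hx : ∀ t ≥ (0 : ℝ),
      HasDerivAt x (x t * (1 - x t) - m * x t * y t / (x t ^ p + c)) t)
    (hy : ∀ t ≥ (0 : ℝ),
      HasDerivAt y ((d - e / (x t + a)) * y t ^ 2) t) :
    ∃ M > (0 : ℝ), ∀ t ≥ (0 : ℝ), x t ≤ M ∧ y t ≤ M :=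
  boundedness_of_solutions_general m c d e a p hm hc hd he ha hp hxs0 hxs1 x y hxpos hypos hx hy
end

section
/- Let m, c, d > 0 and 0 < μ. Suppose x, y : [0, ∞) → ℝ are positive differentiable functions and that on an interval the quantities A1 := μ − d·x(t)/(x(t)^p + c) and A2 := d − e/(x(t) + a) − (d/m)·(x(t)/y(t))² are negative, where the pair satisfies x'(t) = x(t)(1 − x(t)) − m·x(t)·y(t)/(x(t)^p + c), y'(t) = (d − e/(x(t) + a))·y(t)², and x(t) ≤ 1. Then σ(t) := (d/m)·x(t) + y(t) satisfies σ'(t) + μ·σ(t) ≤ (d/m)·(1 + μ) on that interval. -/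
/-- Key differential inequality in the boundedness proof: if along the solution
`A1 = μ − d x/(x^p + c) < 0` and `A2 = d − e/(x + a) − (d/m)(x/y)² < 0` on a set
`s ⊆ [0, ∞)`, then `σ = (d/m) x + y` satisfies `σ' + μ σ ≤ (d/m)(1 + μ)` on `s`. -/
theorem sigma_differential_inequality
    (m c d e a p μ : ℝ) (hm : 0 < m) (hc : 0 < c) (hd : 0 < d) (hμ : 0 < μ)
    (x y : ℝ → ℝ)
    (hxpos : ∀ t ≥ (0 : ℝ), 0 < x t) (hypos : ∀ t ≥ (0 : ℝ), 0 < y t)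
    (hx : ∀ t ≥ (0 : ℝ),
      HasDerivAt x (x t * (1 - x t) - m * x t * y t / (x t ^ p + c)) t)
    (hy : ∀ t ≥ (0 : ℝ),
      HasDerivAt y ((d - e / (x t + a)) * y t ^ 2) t)
    (hxle1 : ∀ t ≥ (0 : ℝ), x t ≤ 1)
    (s : Set ℝ) (hs : s ⊆ Set.Ici (0 : ℝ))
    (hA1 : ∀ t ∈ s, μ - d * x t / (x t ^ p + c) < 0)
    (hA2 : ∀ t ∈ s, d - e / (x t + a) - (d / m) * (x t / y t) ^ 2 < 0) :
    ∀ t ∈ s,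
      deriv (fun τ => (d / m) * x τ + y τ) t +
        μ * ((d / m) * x t + y t) ≤ (d / m) * (1 + μ) := by
  intro t hts
  have ht : (0:ℝ) ≤ t := hs hts
  have hxp := hxpos t ht
  have hyp := hypos t ht
  have hderiv : HasDerivAt (fun τ => (d / m) * x τ + y τ)
      ((d / m) * (x t * (1 - x t) - m * x t * y t / (x t ^ p + c)) +
        (d - e / (x t + a)) * y t ^ 2) t :=
    ((hx t ht).const_mul (d / m)).add (hy t ht)
  rw [hderiv.deriv]
  have hxc : 0 < x t ^ p + c := by positivity
  have hA1t := hA1 t hts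
  have hA2t := hA2 t hts
  have h1 : y t * (μ - d * x t / (x t ^ p + c)) ≤ 0 :=
    le_of_lt (mul_neg_of_pos_of_neg hyp hA1t)
  have h2 : (d - e / (x t + a)) * y t ^ 2 ≤ (d / m) * x t ^ 2 := by
    have hy2 : (0:ℝ) < y t ^ 2 := by positivity
    have := mul_lt_mul_of_pos_right hA2t hy2
    have hxy : (d / m) * (x t / y t) ^ 2 * y t ^ 2 = (d / m) * x t ^ 2 := by
      field_simp
    nlinarith
  have h3 : (d / m) * (x t * (1 - x t)) + (d / m) * μ * x t +
      (d / m) * x t ^ 2 ≤ (d / m) * (1 + μ) := by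
    have hdm : 0 < d / m := by positivity
    have hx1 := hxle1 t ht
    nlinarith [mul_nonneg hdm.le hxp.le, mul_nonneg (mul_nonneg hdm.le hμ.le) (sub_nonneg.mpr hx1)]
  have key : (d / m) * (m * x t * y t / (x t ^ p + c)) =
      y t * (d * x t / (x t ^ p + c)) := by
    field_simp
  nlinarith [h1, h2, h3]
end
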